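/- arXiv:1809.01959 — 3 statements merged into one kernel-verified Lean document; each statement's English description precedes it below -/
import Mathlib

section
/- The function A satisfies the triangle inequality: for all x, y, z in [0, s_f], A(x,z) ≤ A(x,y) + A(y,z). -/
open MeasureTheory Set

/-- `A(x,y) = ∫_x^y (α⁺(ξ)·χ(y−x) + α⁻(ξ)·χ(x−y)) dξ` where `χ(s) = 1` if `s ≥ 0` else `0`. -/
noncomputable def Aint (αp αm : ℝ → ℝ) (x y : ℝ) : ℝ :=
  ∫ ξ in x..y, (αp ξ * (if 0 ≤ y - x then (1:ℝ) else 0) +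
    αm ξ * (if 0 ≤ x - y then (1:ℝ) else 0))

theorem stmt_2 (sf : ℝ) (hsf : 0 < sf) (αp αm : ℝ → ℝ)
    (hip : IntervalIntegrable αp volume 0 sf)
    (him : IntervalIntegrable αm volume 0 sf)
    (hp : ∀ s ∈ Icc (0:ℝ) sf, 0 ≤ αp s)
    (hm : ∀ s ∈ Icc (0:ℝ) sf, αm s ≤ 0)
    (x y z : ℝ) (hx : x ∈ Icc (0:ℝ) sf) (hy : y ∈ Icc (0:ℝ) sf)
    (hz : z ∈ Icc (0:ℝ) sf) :
    Aint αp αm x z ≤ Aint αp αm x y + Aint αp αm y z := by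
  have hIcc : uIcc (0:ℝ) sf = Icc 0 sf := uIcc_of_le hsf.le
  have Ip : ∀ a ∈ Icc (0:ℝ) sf, ∀ b ∈ Icc (0:ℝ) sf, IntervalIntegrable αp volume a b := by
    intro a ha b hb
    exact hip.mono_set (uIcc_subset_uIcc (by rw [hIcc]; exact ha) (by rw [hIcc]; exact hb))
  have Im : ∀ a ∈ Icc (0:ℝ) sf, ∀ b ∈ Icc (0:ℝ) sf, IntervalIntegrable αm volume a b := by
    intro a ha b hb
    exact him.mono_set (uIcc_subset_uIcc (by rw [hIcc]; exact ha) (by rw [hIcc]; exact hb))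
  have mono : ∀ a ∈ Icc (0:ℝ) sf, ∀ b ∈ Icc (0:ℝ) sf, a ≤ b →
      (∫ ξ in a..b, αm ξ) ≤ ∫ ξ in a..b, αp ξ := by
    intro a ha b hb hab
    refine intervalIntegral.integral_mono_on hab (Im a ha b hb) (Ip a ha b hb) ?_
    intro s hs
    have hs' : s ∈ Icc (0:ℝ) sf := ⟨ha.1.trans hs.1, hs.2.trans hb.2⟩
    exact (hm s hs').trans (hp s hs')
  have hA : ∀ a ∈ Icc (0:ℝ) sf, ∀ b ∈ Icc (0:ℝ) sf,
      Aint αp αm a b = if a ≤ b then (∫ ξ in a..b, αp ξ) else (∫ ξ in a..b, αm ξ) := by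
    intro a ha b hb
    have h1 : Aint αp αm a b =
        (∫ ξ in a..b, αp ξ) * (if 0 ≤ b - a then (1:ℝ) else 0)
        + (∫ ξ in a..b, αm ξ) * (if 0 ≤ a - b then (1:ℝ) else 0) := by
      unfold Aint
      rw [intervalIntegral.integral_add ((Ip a ha b hb).mul_const _) ((Im a ha b hb).mul_const _),
        intervalIntegral.integral_mul_const, intervalIntegral.integral_mul_const]
    rw [h1]
    rcases lt_trichotomy a b with h | h | h
    · rw [if_pos (by linarith), if_neg (by linarith), if_pos h.le]; ring
    · subst h; simp
    · rw [if_neg (by linarith), if_pos (by linarith), if_neg (not_le.2 h)]; ring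
  have addp : ∀ a ∈ Icc (0:ℝ) sf, ∀ b ∈ Icc (0:ℝ) sf, ∀ c ∈ Icc (0:ℝ) sf,
      (∫ ξ in a..b, αp ξ) + (∫ ξ in b..c, αp ξ) = ∫ ξ in a..c, αp ξ :=
    fun a ha b hb c hc =>
      intervalIntegral.integral_add_adjacent_intervals (Ip a ha b hb) (Ip b hb c hc)
  have addm : ∀ a ∈ Icc (0:ℝ) sf, ∀ b ∈ Icc (0:ℝ) sf, ∀ c ∈ Icc (0:ℝ) sf,
      (∫ ξ in a..b, αm ξ) + (∫ ξ in b..c, αm ξ) = ∫ ξ in a..c, αm ξ :=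
    fun a ha b hb c hc =>
      intervalIntegral.integral_add_adjacent_intervals (Im a ha b hb) (Im b hb c hc)
  rw [hA x hx z hz, hA x hx y hy, hA y hy z hz]
  split_ifs with h1 h2 h3 h3 h2 h3 h3
  · -- x ≤ z, x ≤ y, y ≤ z
    linarith [addp x hx y hy z hz]
  · -- x ≤ z, x ≤ y, z ≤ y
    have hzy : z ≤ y := le_of_not_ge h3
    have e1 := addp x hx z hz y hy
    have e2 := addm y hy z hz y hy
    have e3 : (∫ ξ in y..y, αm ξ) = 0 := intervalIntegral.integral_same
    have := mono z hz y hy hzy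
    linarith
  · -- x ≤ z, y ≤ x, y ≤ z
    have hyx : y ≤ x := le_of_not_ge h2
    have e1 := addp y hy x hx z hz
    have e2 := addm x hx y hy x hx
    have e3 : (∫ ξ in x..x, αm ξ) = 0 := intervalIntegral.integral_same
    have := mono y hy x hx hyx
    linarith
  · -- x ≤ z, y ≤ x, z ≤ y : forces x = y = z
    have hyx : y ≤ x := le_of_not_ge h2
    have hzy : z ≤ y := le_of_not_ge h3
    have hxy : x = y := le_antisymm (by linarith) hyx
    have hyz : y = z := le_antisymm (by linarith) hzy
    subst hxy; subst hyz
    simp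
  · exact absurd (h2.trans h3) h1
  · -- z < x, x ≤ y, z ≤ y
    have e1 := addm y hy x hx z hz
    have e2 := addm x hx y hy x hx
    have e3 : (∫ ξ in x..x, αm ξ) = 0 := intervalIntegral.integral_same
    have := mono x hx y hy h2
    linarith
  · -- z < x, y ≤ x, y ≤ z
    have e1 := addm x hx y hy z hz
    have := mono y hy z hz h3
    linarith
  · -- z ≤ y ≤ x
    linarith [addm x hx y hy z hz]
end

section
/- The set { u ∈ P : u = M̄(u) and μ⁻ ≤ u ≤ μ⁺ pointwise } is nonempty if and only if M̄(μ⁺) ≥ μ⁻ pointwise. -/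
open Set

/-- The meet operator `M̄(u)(x) = inf_{y ∈ [0,s_f]} { u(y) + A(y,x) }`. -/
noncomputable def Mbar (sf : ℝ) (A : ℝ → ℝ → ℝ) (u : ℝ → ℝ) : ℝ → ℝ :=
  fun x => sInf {z : ℝ | ∃ y ∈ Icc (0:ℝ) sf, z = u y + A y x}

/-- The set `{ u ∈ P : u = M̄(u), μ⁻ ≤ u ≤ μ⁺ }` is nonempty iff `M̄(μ⁺) ≥ μ⁻`. -/
theorem stmt_12 (sf C : ℝ) (hsf : 0 < sf) (A : ℝ → ℝ → ℝ)
    (hA0 : ∀ x ∈ Icc (0:ℝ) sf, ∀ y ∈ Icc (0:ℝ) sf, 0 ≤ A x y)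
    (hAxx : ∀ x ∈ Icc (0:ℝ) sf, A x x = 0)
    (hAtri : ∀ x ∈ Icc (0:ℝ) sf, ∀ y ∈ Icc (0:ℝ) sf, ∀ z ∈ Icc (0:ℝ) sf,
      A x z ≤ A x y + A y z)
    (μm μp : ℝ → ℝ)
    (hμp : ∀ s ∈ Icc (0:ℝ) sf, 0 ≤ μp s ∧ μp s ≤ C)
    (hμm : ∀ s ∈ Icc (0:ℝ) sf, 0 ≤ μm s ∧ μm s ≤ sSup (μp '' Icc (0:ℝ) sf)) :
    (∃ u : ℝ → ℝ,
      (∀ s ∈ Icc (0:ℝ) sf, 0 ≤ u s ∧ u s ≤ sSup (μp '' Icc (0:ℝ) sf)) ∧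
      (∀ s ∈ Icc (0:ℝ) sf, u s = Mbar sf A u s) ∧
      (∀ s ∈ Icc (0:ℝ) sf, μm s ≤ u s ∧ u s ≤ μp s))
    ↔ (∀ s ∈ Icc (0:ℝ) sf, μm s ≤ Mbar sf A μp s) := by
  have h0 : (0:ℝ) ∈ Icc (0:ℝ) sf := ⟨le_refl 0, hsf.le⟩
  have hbdd : ∀ v : ℝ → ℝ, (∀ s ∈ Icc (0:ℝ) sf, 0 ≤ v s) → ∀ s ∈ Icc (0:ℝ) sf,
      BddBelow {z : ℝ | ∃ y ∈ Icc (0:ℝ) sf, z = v y + A y s} := by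
    intro v hv s hs
    exact ⟨0, by rintro z ⟨y, hy, rfl⟩; exact add_nonneg (hv y hy) (hA0 y hy s hs)⟩
  have hne : ∀ v : ℝ → ℝ, ∀ s : ℝ,
      Set.Nonempty {z : ℝ | ∃ y ∈ Icc (0:ℝ) sf, z = v y + A y s} := by
    intro v s; exact ⟨v 0 + A 0 s, 0, h0, rfl⟩
  have hμp0 : ∀ s ∈ Icc (0:ℝ) sf, 0 ≤ μp s := fun s hs => (hμp s hs).1
  have hle : ∀ s ∈ Icc (0:ℝ) sf, Mbar sf A μp s ≤ μp s := by
    intro s hs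
    have := csInf_le (hbdd μp hμp0 s hs) (⟨s, hs, rfl⟩ :
      μp s + A s s ∈ {z : ℝ | ∃ y ∈ Icc (0:ℝ) sf, z = μp y + A y s})
    rwa [hAxx s hs, add_zero] at this
  constructor
  · rintro ⟨u, hub, hfix, hbd⟩ s hs
    have hu0 : ∀ s ∈ Icc (0:ℝ) sf, 0 ≤ u s := fun s hs => (hub s hs).1
    have : u s ≤ Mbar sf A μp s := by
      rw [hfix s hs]
      apply le_csInf (hne μp s)
      rintro z ⟨y, hy, rfl⟩
      have h1 : Mbar sf A u s ≤ u y + A y s := csInf_le (hbdd u hu0 s hs) ⟨y, hy, rfl⟩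
      have h2 : u y ≤ μp y := (hbd y hy).2
      linarith
    exact le_trans (hbd s hs).1 this
  · intro h
    set u := Mbar sf A μp with hu
    have hu0 : ∀ s ∈ Icc (0:ℝ) sf, 0 ≤ u s := by
      intro s hs
      apply le_csInf (hne μp s)
      rintro z ⟨y, hy, rfl⟩
      exact add_nonneg (hμp0 y hy) (hA0 y hy s hs)
    refine ⟨u, fun s hs => ⟨hu0 s hs, ?_⟩, ?_, fun s hs => ⟨h s hs, hle s hs⟩⟩
    · refine le_trans (hle s hs) (le_csSup ⟨C, ?_⟩ ⟨s, hs, rfl⟩)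
      rintro z ⟨y, hy, rfl⟩; exact (hμp y hy).2
    · intro s hs
      apply le_antisymm
      · -- u s ≤ Mbar u s
        apply le_csInf (hne u s)
        rintro z ⟨y, hy, rfl⟩
        have : u s - A y s ≤ u y := by
          apply le_csInf (hne μp y)
          rintro w ⟨t, ht, rfl⟩
          have h1 : u s ≤ μp t + A t s := csInf_le (hbdd μp hμp0 s hs) ⟨t, ht, rfl⟩
          have h2 : A t s ≤ A t y + A y s := hAtri t ht y hy s hs
          linarith
        linarith
      · -- Mbar u s ≤ u s
        have := csInf_le (hbdd u hu0 s hs) (⟨s, hs, rfl⟩ :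
          u s + A s s ∈ {z : ℝ | ∃ y ∈ Icc (0:ℝ) sf, z = u y + A y s})
        rwa [hAxx s hs, add_zero] at this
end

section
/- Conversely, if w : [0,s_f] → ℝ is Lipschitz and satisfies M̄(w) = w, i.e., w(x) ≤ w(y) + A(y,x) for all x, y, then α⁻(s) ≤ w'(s) ≤ α⁺(s) for almost every s ∈ [0,s_f]. -/
open MeasureTheory Set Filter Topology intervalIntegral

/-- `A(y,x) = ∫_y^x α⁺` if `y ≤ x`, and `∫_x^y (−α⁻)` if `y > x`. -/
noncomputable def A2 (αp αm : ℝ → ℝ) (y x : ℝ) : ℝ :=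
  if y ≤ x then ∫ t in y..x, αp t else ∫ t in x..y, (-αm t)

/-- If a Lipschitz `w` satisfies `M̄(w) = w`, i.e. `w(x) ≤ w(y) + A(y,x)` for
all `x, y`, then `α⁻ ≤ w' ≤ α⁺` almost everywhere on `[0,s_f]`. -/
theorem stmt_15 (sf : ℝ) (hsf : 0 < sf) (αp αm w : ℝ → ℝ) (K : NNReal)
    (hcp : ContinuousOn αp (Icc (0:ℝ) sf))
    (hcm : ContinuousOn αm (Icc (0:ℝ) sf))
    (hp : ∀ s ∈ Icc (0:ℝ) sf, 0 ≤ αp s)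
    (hm : ∀ s ∈ Icc (0:ℝ) sf, αm s ≤ 0)
    (hw : LipschitzOnWith K w (Icc (0:ℝ) sf))
    (hfix : ∀ x ∈ Icc (0:ℝ) sf, ∀ y ∈ Icc (0:ℝ) sf, w x ≤ w y + A2 αp αm y x) :
    ∀ᵐ s ∂volume, s ∈ Icc (0:ℝ) sf →
      αm s ≤ derivWithin w (Icc (0:ℝ) sf) s ∧
      derivWithin w (Icc (0:ℝ) sf) s ≤ αp s := by
  have h0 : ∀ᵐ s : ℝ ∂volume, s ≠ 0 := by
    rw [ae_iff]; simpa using measure_singleton (0:ℝ)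
  have h1 : ∀ᵐ s : ℝ ∂volume, s ≠ sf := by
    rw [ae_iff]; simpa using measure_singleton sf
  filter_upwards [h0, h1] with s hs0 hs1 hs
  have hs' : s ∈ Ioo (0:ℝ) sf := ⟨lt_of_le_of_ne hs.1 (Ne.symm hs0), lt_of_le_of_ne hs.2 hs1⟩
  by_cases hdiff : DifferentiableWithinAt ℝ w (Icc (0:ℝ) sf) s
  · set d := derivWithin w (Icc (0:ℝ) sf) s with hdd
    have hd : HasDerivWithinAt w d (Icc (0:ℝ) sf) s := hdiff.hasDerivWithinAt
    haveI : (𝓝[Ioo s sf] s).NeBot := left_nhdsWithin_Ioo_neBot hs'.2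
    -- slope of w tends to d along the right
    have hsub : Ioo s sf ⊆ Icc (0:ℝ) sf \ {s} := fun y hy =>
      ⟨⟨(hs'.1.trans hy.1).le, hy.2.le⟩, ne_of_gt hy.1⟩
    have hslope : Tendsto (slope w s) (𝓝[Ioo s sf] s) (𝓝 d) :=
      (hasDerivWithinAt_iff_tendsto_slope.mp hd).mono_left (nhdsWithin_mono _ hsub)
    have hIoo : Ioo s sf ∈ 𝓝[>] s := Ioo_mem_nhdsGT_of_mem ⟨le_refl s, hs'.2⟩
    have hIcc : Icc (0:ℝ) sf ∈ 𝓝[>] s :=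
      mem_of_superset hIoo (fun y hy => ⟨(hs'.1.trans hy.1).le, hy.2.le⟩)
    have hIoosub : Ioo s sf ⊆ Icc (0:ℝ) sf := fun y hy => ⟨(hs'.1.trans hy.1).le, hy.2.le⟩
    -- FTC slopes
    have key : ∀ f : ℝ → ℝ, ContinuousOn f (Icc (0:ℝ) sf) →
        Tendsto (slope (fun y => ∫ t in s..y, f t) s) (𝓝[Ioo s sf] s) (𝓝 (f s)) := by
      intro f hcf
      have hmeas : StronglyMeasurableAtFilter f (𝓝[>] s) volume :=
        ⟨Ioo s sf, hIoo, (hcf.mono hIoosub).aestronglyMeasurable measurableSet_Ioo⟩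
      have hcont : ContinuousWithinAt f (Ioi s) s :=
        (hcf s hs).mono_of_mem_nhdsWithin hIcc
      have hF : HasDerivWithinAt (fun y => ∫ t in s..y, f t) (f s) (Ici s) s :=
        integral_hasDerivWithinAt_right (IntervalIntegrable.refl) hmeas hcont
      have := hasDerivWithinAt_iff_tendsto_slope.mp hF
      exact this.mono_left (nhdsWithin_mono _ (fun y hy => ⟨hy.1.le, ne_of_gt hy.1⟩))
    constructor
    · -- lower bound
      refine le_of_tendsto_of_tendsto (key αm hcm) hslope ?_
      filter_upwards [eventually_mem_nhdsWithin] with y hy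
      have hy0 : (0:ℝ) < y - s := sub_pos.mpr hy.1
      have hA := hfix s hs y (hIoosub hy)
      rw [A2, if_neg (not_le.mpr hy.1), intervalIntegral.integral_neg] at hA
      have : (∫ t in s..y, αm t) ≤ w y - w s := by linarith
      rw [slope_def_field, slope_def_field, intervalIntegral.integral_same, sub_zero]
      exact (div_le_div_iff_of_pos_right hy0).mpr this
    · -- upper bound
      refine le_of_tendsto_of_tendsto hslope (key αp hcp) ?_
      filter_upwards [eventually_mem_nhdsWithin] with y hy
      have hy0 : (0:ℝ) < y - s := sub_pos.mpr hy.1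
      have hA := hfix y (hIoosub hy) s hs
      rw [A2, if_pos hy.1.le] at hA
      have : w y - w s ≤ ∫ t in s..y, αp t := by linarith
      rw [slope_def_field, slope_def_field, intervalIntegral.integral_same, sub_zero]
      exact (div_le_div_iff_of_pos_right hy0).mpr this
  · rw [derivWithin_zero_of_not_differentiableWithinAt hdiff]
    exact ⟨hm s hs, hp s hs⟩
end
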